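/- arXiv:1406.5469 — 5 statements merged into one kernel-verified Lean document; each statement's English description precedes it below -/
import Mathlib

section
/- Let g be an entire function of the form g(z) = (z-u)e^{h(z)} + a, where h is a polynomial and u ∈ ℂ. If g has exactly one simple critical point located at z = 0 and u ≠ 0, then h has degree 1, i.e., h(z) = cz + d for some constants c, d with c = 1/u. -/
/-!
Writing `g' = e^h · P` with `P = 1 + (z - u) h'`, the critical points of `g` are the zeros of the
polynomial `P`. By hypothesis `P` has the single root `0`, and it is simple since
`g''(0) = e^{h(0)} P'(0)`; as `ℂ` is algebraically closed, `deg P ≤ 1`. But `h' ≠ 0` (else `P = 1`),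
so `deg P = deg h' + 1`, forcing `h'` to be a constant `c`, and `P(0) = 1 - u c = 0` gives `c = 1/u`.
-/

open Polynomial

noncomputable def derivFactor (h : ℂ[X]) (u : ℂ) : ℂ[X] := 1 + (X - C u) * derivative h

theorem hasDerivAt_sub_mul_cexp_eval_add (h : ℂ[X]) (u a z : ℂ) :
    HasDerivAt (fun w => (w - u) * Complex.exp (h.eval w) + a)
      (Complex.exp (h.eval z) * (derivFactor h u).eval z) z := by
  refine ((((hasDerivAt_id' z).sub_const u).fun_mul (h.hasDerivAt z).cexp).add_const a).congr_deriv
    ?_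
  simp only [derivFactor, eval_add, eval_one, eval_mul, eval_sub, eval_X, eval_C]
  ring

theorem hasDerivAt_cexp_eval_mul_eval (q p : ℂ[X]) (z : ℂ) :
    HasDerivAt (fun w => Complex.exp (q.eval w) * p.eval w)
      (Complex.exp (q.eval z) * (q.derivative.eval z * p.eval z + p.derivative.eval z)) z := by
  refine ((q.hasDerivAt z).cexp.fun_mul (p.hasDerivAt z)).congr_deriv ?_
  ring

theorem natDegree_le_one_of_isRoot_imp_eq {K : Type*} [Field K] [IsAlgClosed K] {p : K[X]}
    (hp : p ≠ 0) {a : K} (hroots : ∀ x, p.IsRoot x → x = a)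
    (hsimple : ¬ p.derivative.IsRoot a) : p.natDegree ≤ 1 := by
  classical
  have hcount : p.roots.count a = Multiset.card p.roots :=
    Multiset.count_eq_card.mpr fun x hx => (hroots x (isRoot_of_mem_roots hx)).symm
  rw [← IsAlgClosed.card_roots_eq_natDegree, ← hcount, count_roots]
  exact not_lt.mp fun h1 => hsimple ((one_lt_rootMultiplicity_iff_isRoot hp).mp h1).2

theorem natDegree_one_add_X_sub_C_mul {R : Type*} [CommRing R] [IsDomain R] (u : R) {q : R[X]}
    (hq : q ≠ 0) : (1 + (X - C u) * q).natDegree = q.natDegree + 1 := by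
  have hmul : ((X - C u) * q).natDegree = q.natDegree + 1 := by
    rw [natDegree_mul (X_sub_C_ne_zero u) hq, natDegree_X_sub_C, add_comm]
  rw [natDegree_add_eq_right_of_natDegree_lt (by rw [hmul, natDegree_one]; omega), hmul]

theorem natDegree_eq_one_of_derivative_eq_C {R : Type*} [CommRing R] [IsDomain R] [CharZero R]
    {p : R[X]} {c : R} (hc : c ≠ 0) (hp : derivative p = C c) : p.natDegree = 1 := by
  have h0 : p.natDegree ≠ 0 := by
    rw [Ne, ← derivative_eq_zero, hp]
    exact C_ne_zero.mpr hc
  have h1 : p.natDegree - 1 = 0 := by rw [← natDegree_derivative, hp, natDegree_C]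
  omega

theorem degree_one_of_unique_simple_critical_point
    (h : Polynomial ℂ) (u aval : ℂ) (hu : u ≠ 0)
    (g : ℂ → ℂ) (hg : ∀ z, g z = (z - u) * Complex.exp (h.eval z) + aval)
    (hcrit : ∀ z : ℂ, deriv g z = 0 ↔ z = 0)
    (hsimple : iteratedDeriv 2 g 0 ≠ 0) :
    h.degree = 1 ∧ h.coeff 1 = 1 / u := by
  have hderiv : deriv g = fun z => Complex.exp (h.eval z) * (derivFactor h u).eval z := by
    ext z
    rw [funext hg]
    exact (hasDerivAt_sub_mul_cexp_eval_add h u aval z).deriv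
  have hroot (z : ℂ) : (derivFactor h u).IsRoot z ↔ z = 0 := by
    simpa [hderiv, Complex.exp_ne_zero] using hcrit z
  have hroot0 : (derivFactor h u).IsRoot 0 := (hroot 0).mpr rfl
  have hsimple_root : ¬ (derivFactor h u).derivative.IsRoot 0 := by
    rw [iteratedDeriv_succ, iteratedDeriv_one, hderiv,
      (hasDerivAt_cexp_eval_mul_eval h _ 0).deriv, hroot0.eq_zero] at hsimple
    simpa [Complex.exp_ne_zero] using hsimple
  have hne : derivFactor h u ≠ 0 := fun h0 => hu ((hroot u).mp (by simp [h0]))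
  have hh' : derivative h ≠ 0 := fun h' => by simp [derivFactor, h'] at hroot0
  have hdeg := natDegree_le_one_of_isRoot_imp_eq hne (fun x => (hroot x).mp) hsimple_root
  rw [derivFactor, natDegree_one_add_X_sub_C_mul u hh'] at hdeg
  have hC : derivative h = C (h.coeff 1) := by
    rw [eq_C_of_natDegree_eq_zero (by omega : (derivative h).natDegree = 0), coeff_derivative]
    simp
  have hcoeff : h.coeff 1 = 1 / u := by
    have h0 := hroot0.eq_zero
    simp only [derivFactor, hC, eval_add, eval_one, eval_mul, eval_sub, eval_X, eval_C] at h0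
    field_simp
    linear_combination -h0
  exact ⟨(degree_eq_iff_natDegree_eq_of_pos one_pos).mpr
    (natDegree_eq_one_of_derivative_eq_C (hcoeff ▸ one_div_ne_zero hu) hC), hcoeff⟩
end

section
/- Let a ∈ ℂ* and r ∈ (0, ∞) satisfy 1 + 3r/2 - e^r > 0 and |a| > 1/(1 + 3r/2 - e^r). Then for every z with |z| = r, |a z²/2 - z| > |a z²/2 - f_a(z)|, and consequently |f_a(z)| > |z| for all z with |z| = r; in particular f_a maps the circle of radius r outside the closed disk of radius r. -/
/-! Write `f_a(z) = a z² / 2 + a g(z)` with `g(z) = e^z (z - 1) + 1 - z² / 2`. Comparing derivatives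
along the segment `[0, z]` gives `|g(z)| ≤ r (e^r - 1 - r)` on `|z| = r`, while
`|a z² / 2 - z| ≥ |a| r² / 2 - r`.
The hypothesis `|a| (1 + 3r/2 - e^r) > 1` says exactly that `|a| r (e^r - 1 - r) < |a| r² / 2 - r`,
and the same gap yields `|f_a(z)| ≥ |a| r² / 2 - |a| r (e^r - 1 - r) > r`. -/

noncomputable def fa (a : ℂ) (z : ℂ) : ℂ := a * (Complex.exp z * (z - 1) + 1)

open Complex Set

lemma norm_cexp_sub_one_le (w : ℂ) : ‖exp w - 1‖ ≤ Real.exp ‖w‖ - 1 := by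
  simpa using norm_exp_sub_sum_le_exp_norm_sub_sum w 1

lemma hasDerivAt_cexp_mul_sub_one_add_one_sub_sq_div_two (w : ℂ) :
    HasDerivAt (fun u => exp u * (u - 1) + 1 - u ^ 2 / 2) (w * (exp w - 1)) w := by
  have h := ((((hasDerivAt_id' w).cexp).mul ((hasDerivAt_id' w).sub_const 1)).add_const 1).sub
    ((hasDerivAt_pow 2 w).div_const 2)
  exact h.congr_deriv (by ring)

/-- Along `t ↦ t • z`, `t ∈ [0, 1]`, the left side has derivative `t z² (exp (t z) - 1)`, whose norm
is at most `‖z‖² (exp (t ‖z‖) - 1)`, the derivative of the right side at `t ‖z‖`. -/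
lemma norm_cexp_mul_sub_one_add_one_sub_sq_div_two_le (z : ℂ) :
    ‖exp z * (z - 1) + 1 - z ^ 2 / 2‖ ≤ ‖z‖ * (Real.exp ‖z‖ - 1 - ‖z‖) := by
  set R := ‖z‖
  let f : ℝ → ℂ := fun t => exp (t * z) * (t * z - 1) + 1 - (t * z) ^ 2 / 2
  let B : ℝ → ℝ := fun t => R * (Real.exp (t * R) - 1 - t * R)
  have hf : ∀ t : ℝ, HasDerivAt f (t * z * (exp (t * z) - 1) * z) t := fun t =>
    ((hasDerivAt_cexp_mul_sub_one_add_one_sub_sq_div_two _).comp (t : ℂ)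
      (hasDerivAt_mul_const z)).comp_ofReal
  have hB : ∀ t : ℝ, HasDerivAt B (R * (Real.exp (t * R) * R - R)) t := fun t =>
    ((((hasDerivAt_mul_const R).exp).sub_const 1).sub (hasDerivAt_mul_const R)).const_mul R
  have bound : ∀ t ∈ Ico (0 : ℝ) 1,
      ‖t * z * (exp (t * z) - 1) * z‖ ≤ R * (Real.exp (t * R) * R - R) := by
    rintro t ⟨ht0, ht1⟩
    have hnorm : ‖(t : ℂ) * z‖ = t * R := by rw [norm_mul, norm_real, Real.norm_of_nonneg ht0]
    have hexp := norm_cexp_sub_one_le (t * z)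
    rw [hnorm] at hexp
    have : 0 ≤ Real.exp (t * R) - 1 := by
      linarith [Real.add_one_le_exp (t * R), mul_nonneg ht0 (norm_nonneg z)]
    rw [norm_mul, norm_mul, hnorm]
    calc t * R * ‖exp (t * z) - 1‖ * R ≤ 1 * R * (Real.exp (t * R) - 1) * R := by
          gcongr
      _ = R * (Real.exp (t * R) * R - R) := by ring
  have := image_norm_le_of_norm_deriv_right_le_deriv_boundary
    (fun t _ => (hf t).continuousAt.continuousWithinAt) (fun t _ => (hf t).hasDerivWithinAt)
    (by simp [f, B]) hB bound (right_mem_Icc.2 zero_le_one)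
  simpa [f, B] using this

theorem fa_expands_circle_general (a : ℂ) (r : ℝ) (hr : 0 < r)
    (h1 : 0 < 1 + 3 * r / 2 - Real.exp r)
    (h2 : 1 / (1 + 3 * r / 2 - Real.exp r) < ‖a‖) :
    ∀ z : ℂ, ‖z‖ = r →
      ‖a * z ^ 2 / 2 - fa a z‖ < ‖a * z ^ 2 / 2 - z‖ ∧
        ‖z‖ < ‖fa a z‖ := by
  intro z hz
  have hquad : ‖a * z ^ 2 / 2‖ = ‖a‖ * r ^ 2 / 2 := by simp [hz]
  have hupper : ‖a * z ^ 2 / 2 - fa a z‖ ≤ ‖a‖ * (r * (Real.exp r - 1 - r)) := by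
    have : a * z ^ 2 / 2 - fa a z = -(a * (exp z * (z - 1) + 1 - z ^ 2 / 2)) := by
      unfold fa; ring
    rw [this, norm_neg, norm_mul, ← hz]
    exact mul_le_mul_of_nonneg_left (norm_cexp_mul_sub_one_add_one_sub_sq_div_two_le z)
      (norm_nonneg a)
  have hgap : ‖a‖ * (r * (Real.exp r - 1 - r)) < ‖a‖ * r ^ 2 / 2 - r := by
    rw [div_lt_iff₀ h1] at h2
    nlinarith
  have hlower : ‖a‖ * r ^ 2 / 2 - r ≤ ‖a * z ^ 2 / 2 - z‖ := by
    rw [← hquad, ← hz]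
    exact norm_sub_norm_le _ _
  have hfa : ‖a‖ * r ^ 2 / 2 - ‖a * z ^ 2 / 2 - fa a z‖ ≤ ‖fa a z‖ := by
    rw [← hquad]
    exact (norm_sub_norm_le _ _).trans_eq (by rw [sub_sub_cancel])
  exact ⟨by linarith, by linarith⟩

theorem fa_expands_circle (a : ℂ) (ha : a ≠ 0) (r : ℝ) (hr : 0 < r)
    (h1 : 0 < 1 + 3 * r / 2 - Real.exp r)
    (h2 : 1 / (1 + 3 * r / 2 - Real.exp r) < ‖a‖) :
    ∀ z : ℂ, ‖z‖ = r →
      ‖a * z ^ 2 / 2 - fa a z‖ < ‖a * z ^ 2 / 2 - z‖ ∧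
        ‖z‖ < ‖fa a z‖ :=
  fa_expands_circle_general a r hr h1 h2
end

section
/- There exists R > 0 (e.g. R = 10) such that the main hyperbolic component C⁰ = {a ∈ ℂ* : a belongs to the immediate basin of the superattracting fixed point 0 of f_a} is contained in the disk {|a| ≤ R}; in particular C⁰ is bounded. -/
open Filter

/-- The basin of attraction of the superattracting fixed point `0` of `fa a`. -/
def basin (a : ℂ) : Set ℂ := {z | Tendsto (fun n => (fa a)^[n] z) atTop (nhds 0)}

/-- The immediate basin: the connected component of the basin containing `0`. -/
def immediateBasin (a : ℂ) : Set ℂ := connectedComponentIn (basin a) 0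

/-- The main hyperbolic component. -/
def mainHypComp : Set ℂ := {a | a ≠ 0 ∧ a ∈ immediateBasin a}

/-!
For `‖a‖ > 16` one has `|f_a z| > |z|` on the circle `|z| = 1/4`, while `f_a` maps a small disk
around `0` into itself. The points whose orbit stays in `|z| < 1/4` and eventually enters that
disk form an open set, and every point of the basin in its closure belongs to it: its orbit stays
in `|z| ≤ 1/4`, and an orbit touching the circle would leave the closed disk at the next step.
So this set is relatively clopen in the basin; it contains the immediate basin, which therefore
lies in `|z| < 1/4` and cannot contain `a`.
-/

open Set Metric Topology Function

section Trapping

variable {X : Type*} {f : X → X} {φ : X → ℝ} {ρ : ℝ} {U : Set X}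

lemma Set.MapsTo.iterate_mem_of_le (hfU : MapsTo f U U) {z : X} {N n : ℕ}
    (hN : f^[N] z ∈ U) (hNn : N ≤ n) : f^[n] z ∈ U := by
  obtain ⟨k, rfl⟩ := Nat.exists_eq_add_of_le hNn
  rw [add_comm, iterate_add_apply]
  exact hfU.iterate k hN

def trappedSet (f : X → X) (φ : X → ℝ) (ρ : ℝ) (U : Set X) : Set X :=
  {z | (∀ n, φ (f^[n] z) < ρ) ∧ ∃ N, f^[N] z ∈ U}

lemma subset_trappedSet (hfU : MapsTo f U U) (hUρ : U ⊆ {z | φ z < ρ}) :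
    U ⊆ trappedSet f φ ρ U :=
  fun _ hz => ⟨fun n => hUρ (hfU.iterate n hz), 0, hz⟩

variable [TopologicalSpace X]

lemma isOpen_trappedSet (hf : Continuous f) (hφ : Continuous φ) (hU : IsOpen U)
    (hfU : MapsTo f U U) (hUρ : U ⊆ {z | φ z < ρ}) : IsOpen (trappedSet f φ ρ U) := by
  refine isOpen_iff_forall_mem_open.mpr fun z ⟨hzρ, N, hN⟩ => ?_
  refine ⟨(⋂ k ∈ Finset.range N, f^[k] ⁻¹' {w | φ w < ρ}) ∩ f^[N] ⁻¹' U, ?_, ?_, ?_⟩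
  · rintro w ⟨hwρ, hwN⟩
    refine ⟨fun n => ?_, N, hwN⟩
    rcases lt_or_ge n N with hn | hn
    · exact mem_iInter₂.mp hwρ n (Finset.mem_range.mpr hn)
    · exact hUρ (hfU.iterate_mem_of_le hwN hn)
  · exact (isOpen_biInter_finset fun k _ =>
      isOpen_lt (hφ.comp (hf.iterate k)) continuous_const).inter (hU.preimage (hf.iterate N))
  · exact ⟨mem_iInter₂.mpr fun k _ => hzρ k, hN⟩

lemma closure_trappedSet_inter_subset {p : X} (hf : Continuous f) (hφ : Continuous φ)
    (hU : U ∈ 𝓝 p) (hesc : ∀ z, φ z = ρ → ρ < φ (f z)) :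
    closure (trappedSet f φ ρ U) ∩ {z | Tendsto (f^[·] z) atTop (𝓝 p)} ⊆ trappedSet f φ ρ U := by
  rintro z ⟨hzT, hzp⟩
  have hcl : closure (trappedSet f φ ρ U) ⊆ ⋂ n, {w | φ (f^[n] w) ≤ ρ} :=
    closure_minimal (fun w hw => mem_iInter.mpr fun n => (hw.1 n).le)
      (isClosed_iInter fun n => isClosed_le (hφ.comp (hf.iterate n)) continuous_const)
  have hle : ∀ n, φ (f^[n] z) ≤ ρ := fun n => mem_iInter.mp (hcl hzT) n
  refine ⟨fun n => (hle n).lt_of_ne fun heq => ?_, (hzp.eventually_mem hU).exists⟩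
  have := hle (n + 1)
  rw [iterate_succ_apply'] at this
  exact (hesc _ heq).not_ge this

theorem connectedComponentIn_basin_subset {p : X} (hf : Continuous f) (hφ : Continuous φ)
    (hU : IsOpen U) (hpU : p ∈ U) (hfU : MapsTo f U U) (hUρ : U ⊆ {z | φ z < ρ})
    (hesc : ∀ z, φ z = ρ → ρ < φ (f z)) :
    connectedComponentIn {z | Tendsto (f^[·] z) atTop (𝓝 p)} p ⊆ {z | φ z < ρ} := by
  intro z hz
  have hp : p ∈ {z | Tendsto (f^[·] z) atTop (𝓝 p)} :=
    connectedComponentIn_nonempty_iff.mp ⟨z, hz⟩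
  refine (isPreconnected_connectedComponentIn.subset_of_closure_inter_subset
    (isOpen_trappedSet hf hφ hU hfU hUρ) ⟨p, mem_connectedComponentIn hp,
      subset_trappedSet hfU hUρ hpU⟩ ?_ hz).1 0
  exact fun w ⟨hwT, hw⟩ => closure_trappedSet_inter_subset hf hφ (hU.mem_nhds hpU) hesc
    ⟨hwT, connectedComponentIn_subset _ _ hw⟩

end Trapping

lemma norm_exp_mul_sub_one_add_one_sub_sq_le {z : ℂ} (hz : ‖z‖ ≤ 1) :
    ‖Complex.exp z * (z - 1) + 1 - z ^ 2 / 2‖ ≤ ‖z‖ ^ 3 := by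
  have hexp : ‖Complex.exp z - (1 + z + z ^ 2 / 2)‖ ≤ ‖z‖ ^ 3 * (2 / 9) := by
    have := Complex.exp_bound hz (n := 3) (by norm_num)
    norm_num [Finset.sum_range_succ, Nat.factorial] at this
    convert this using 2
  have hz1 : ‖z - 1‖ ≤ 2 := (norm_sub_le z 1).trans (by rw [norm_one]; linarith)
  calc ‖Complex.exp z * (z - 1) + 1 - z ^ 2 / 2‖
      = ‖z ^ 3 / 2 + (Complex.exp z - (1 + z + z ^ 2 / 2)) * (z - 1)‖ := by ring_nf
    _ ≤ ‖z‖ ^ 3 / 2 + ‖z‖ ^ 3 * (2 / 9) * 2 :=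
      norm_add_le_of_le (by simp [norm_pow]) (norm_mul_le_of_le hexp hz1)
    _ ≤ ‖z‖ ^ 3 := by nlinarith [pow_nonneg (norm_nonneg z) 3]

lemma continuous_fa (a : ℂ) : Continuous (fa a) := by
  unfold fa; fun_prop

lemma norm_fa_le (a : ℂ) {z : ℂ} (hz : ‖z‖ ≤ 1 / 2) : ‖fa a z‖ ≤ ‖a‖ * ‖z‖ ^ 2 := by
  have hg := norm_exp_mul_sub_one_add_one_sub_sq_le (hz.trans (by norm_num))
  rw [fa, norm_mul]
  gcongr
  calc ‖Complex.exp z * (z - 1) + 1‖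
      ≤ ‖z ^ 2 / 2‖ + ‖Complex.exp z * (z - 1) + 1 - z ^ 2 / 2‖ := norm_le_insert' _ _
    _ ≤ ‖z‖ ^ 2 / 2 + ‖z‖ ^ 2 * ‖z‖ := by simp only [norm_div, norm_pow]; norm_num; linarith
    _ ≤ ‖z‖ ^ 2 := by nlinarith [sq_nonneg ‖z‖]

lemma le_norm_fa (a : ℂ) {z : ℂ} (hz : ‖z‖ ≤ 1) :
    ‖a‖ * (‖z‖ ^ 2 * (1 / 2 - ‖z‖)) ≤ ‖fa a z‖ := by
  have hg := norm_exp_mul_sub_one_add_one_sub_sq_le hz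
  rw [fa, norm_mul]
  gcongr
  calc ‖z‖ ^ 2 * (1 / 2 - ‖z‖)
      = ‖z ^ 2 / 2‖ - ‖z‖ ^ 3 := by simp only [norm_div, norm_pow]; norm_num; ring
    _ ≤ ‖z ^ 2 / 2‖ - ‖Complex.exp z * (z - 1) + 1 - z ^ 2 / 2‖ := by linarith
    _ ≤ ‖Complex.exp z * (z - 1) + 1‖ := by
      linarith [norm_sub_norm_le (z ^ 2 / 2) (Complex.exp z * (z - 1) + 1),
        norm_sub_rev (z ^ 2 / 2) (Complex.exp z * (z - 1) + 1)]

lemma mapsTo_fa_ball {a : ℂ} (ha : 2 ≤ ‖a‖) : MapsTo (fa a) (ball 0 ‖a‖⁻¹) (ball 0 ‖a‖⁻¹) := by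
  intro z hz
  rw [mem_ball_zero_iff] at hz ⊢
  have ha0 : 0 < ‖a‖ := by linarith
  have haz : ‖a‖ * ‖z‖ ≤ 1 := by
    rw [← mul_one ‖a‖⁻¹, lt_inv_mul_iff₀ ha0] at hz
    exact hz.le
  have hz2 : ‖z‖ ≤ 1 / 2 := hz.le.trans (by rw [inv_le_comm₀ ha0 (by norm_num)]; linarith)
  calc ‖fa a z‖ ≤ ‖a‖ * ‖z‖ ^ 2 := norm_fa_le a hz2
    _ = (‖a‖ * ‖z‖) * ‖z‖ := by ring
    _ ≤ ‖z‖ := mul_le_of_le_one_left (norm_nonneg z) haz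
    _ < ‖a‖⁻¹ := hz

lemma lt_norm_fa_of_norm_eq {a z : ℂ} (ha : 16 < ‖a‖) (hz : ‖z‖ = 1 / 4) : 1 / 4 < ‖fa a z‖ := by
  have := le_norm_fa a (z := z) (by rw [hz]; norm_num)
  rw [hz] at this
  linarith

lemma immediateBasin_subset_ball {a : ℂ} (ha : 16 < ‖a‖) : immediateBasin a ⊆ ball 0 (1 / 4) := by
  have ha0 : 0 < ‖a‖ := by linarith
  have hsmall : ball (0 : ℂ) ‖a‖⁻¹ ⊆ {z | ‖z‖ < 1 / 4} := fun z hz =>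
    (mem_ball_zero_iff.mp hz).trans_le (by rw [inv_le_comm₀ ha0 (by norm_num)]; linarith)
  rw [ball_zero_eq]
  exact connectedComponentIn_basin_subset (continuous_fa a) continuous_norm isOpen_ball
    (mem_ball_self (inv_pos.mpr ha0)) (mapsTo_fa_ball (by linarith)) hsmall
    fun z hz => lt_norm_fa_of_norm_eq ha hz

theorem mainHypComp_bounded :
    ∃ R : ℝ, 0 < R ∧ ∀ a ∈ mainHypComp, ‖a‖ ≤ R := by
  refine ⟨16, by norm_num, fun a ⟨_, ha⟩ => ?_⟩
  by_contra! h
  have := mem_ball_zero_iff.mp (immediateBasin_subset_ball h ha)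
  linarith
end

section
/- Let (U_n, u_n) be pointed domains with u_n → u, and suppose that for every subsequence such that the complements K_{n_k} = Ĉ \ U_{n_k} converge in the Hausdorff metric on compact subsets of the Riemann sphere to some compact set K, the set U is the connected component of Ĉ \ K containing u. Then (U_n, u_n) converges to (U, u) in the sense of Carathéodory, and conversely. -/
/-!
Transport everything to `X` along the open embedding `e = φ ∘ (↑)`, under which the complement
of `U n` in the sphere becomes `(e '' U n)ᶜ`, a set containing `φ ∞`. Two facts about a
Hausdorff limit `K` of sets `A i` turn the kernel conditions of Carathéodory convergence into
statements about `K`: a compact set disjoint from `K` is eventually disjoint from `A i`, and an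
open set eventually disjoint from `A i` is disjoint from `K`. Conversely, compactness of the
space of nonempty compact subsets of `X` provides Hausdorff-convergent subsequences. The one
non-formal inclusion, the component of `v` in `e ⁻¹' Kᶜ` lying in `V`, comes from joining `v`
to a point by a path and thickening it to a connected open set whose compact closure avoids
`e ⁻¹' K`; it then lies in `U n` for large `n`, hence in `V`.
-/

open Filter Metric

/-- Carathéodory convergence of a sequence of pointed domains `(U n, u n)` to `(V, v)`. -/
def CaraConv (U : ℕ → Set ℂ) (u : ℕ → ℂ) (V : Set ℂ) (v : ℂ) : Prop :=
  Tendsto u atTop (nhds v) ∧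
  (∀ C : Set ℂ, C ⊆ V → IsCompact C → ∀ᶠ n in atTop, C ⊆ U n) ∧
  (∀ N : Set ℂ, IsOpen N → IsConnected N → v ∈ N →
    (∃ᶠ n in atTop, N ⊆ U n) → N ⊆ V)

open Set Topology Bornology

theorem Function.Injective.disjoint_image_compl_image_iff {α β : Type*} {f : α → β}
    (hf : Function.Injective f) {s t : Set α} : Disjoint (f '' s) (f '' t)ᶜ ↔ s ⊆ t :=
  disjoint_compl_right_iff_subset.trans (image_subset_image_iff hf)

theorem Topology.IsOpenEmbedding.image_connectedComponentIn {X Y : Type*} [TopologicalSpace X]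
    [TopologicalSpace Y] {e : Y → X} (he : IsOpenEmbedding e) {S : Set X} (hS : S ⊆ range e)
    {y : Y} (hy : e y ∈ S) :
    e '' connectedComponentIn (e ⁻¹' S) y = connectedComponentIn S (e y) := by
  refine subset_antisymm ?_ fun x hx => ?_
  · simpa [image_preimage_eq_of_subset hS] using
      he.continuous.continuousOn.image_connectedComponentIn_subset (s := e ⁻¹' S) hy
  · have hW : connectedComponentIn S (e y) ⊆ range e :=
      (connectedComponentIn_subset _ _).trans hS
    have hpre : e ⁻¹' connectedComponentIn S (e y) ⊆ connectedComponentIn (e ⁻¹' S) y :=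
      (isPreconnected_connectedComponentIn.preimage_of_isOpenMap he.injective he.isOpenMap hW)
        |>.subset_connectedComponentIn (mem_connectedComponentIn hy)
          (preimage_mono (connectedComponentIn_subset _ _))
    obtain ⟨z, rfl⟩ := hW hx
    exact ⟨z, hpre hx, rfl⟩

section NormedSpace

variable {E : Type*} [NormedAddCommGroup E] [NormedSpace ℝ E]

theorem IsPreconnected.thickening {C : Set E} (hC : IsPreconnected C) (δ : ℝ) :
    IsPreconnected (thickening δ C) := by
  rw [← add_ball_zero, ← image2_add, ← image_uncurry_prod]
  exact (hC.prod (convex_ball 0 δ).isPreconnected).image _ continuous_add.continuousOn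

variable [ProperSpace E] {Ω : Set E}

theorem IsPreconnected.exists_isOpen_superset_closure_subset {C : Set E} (hCp : IsPreconnected C)
    (hC : IsCompact C) (hΩ : IsOpen Ω) (hCΩ : C ⊆ Ω) :
    ∃ N, IsOpen N ∧ IsPreconnected N ∧ C ⊆ N ∧ IsCompact (closure N) ∧ closure N ⊆ Ω := by
  obtain ⟨δ, hδ, hCδ⟩ := hC.exists_thickening_subset_open hΩ hCΩ
  have hclosure : closure (Metric.thickening (δ / 2) C) ⊆ cthickening (δ / 2) C :=
    closure_thickening_subset_cthickening _ _
  exact ⟨Metric.thickening (δ / 2) C, isOpen_thickening, hCp.thickening _,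
    self_subset_thickening (half_pos hδ) C,
    hC.cthickening.of_isClosed_subset isClosed_closure hclosure,
    hclosure.trans ((cthickening_subset_thickening' hδ (half_lt_self hδ) C).trans hCδ)⟩

theorem IsOpen.exists_isPreconnected_mem_closure_subset (hΩ : IsOpen Ω) (hΩc : IsConnected Ω)
    {x y : E} (hx : x ∈ Ω) (hy : y ∈ Ω) :
    ∃ N, IsOpen N ∧ IsPreconnected N ∧ x ∈ N ∧ y ∈ N ∧ IsCompact (closure N) ∧
      closure N ⊆ Ω := by
  obtain ⟨γ, hγ⟩ := (hΩ.isConnected_iff_isPathConnected.1 hΩc).joinedIn x hx y hy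
  obtain ⟨N, hN, hNp, hγN, hNc, hNΩ⟩ :=
    (isPreconnected_range γ.continuous).exists_isOpen_superset_closure_subset
      (isCompact_range γ.continuous) hΩ (range_subset_iff.2 hγ)
  exact ⟨N, hN, hNp, hγN ⟨0, γ.source⟩, hγN ⟨1, γ.target⟩, hNc, hNΩ⟩

end NormedSpace

section HausdorffLimit

variable {X ι : Type*} [MetricSpace X] {l : Filter ι} {A : ι → Set X} {K : Set X}

theorem hausdorffEDist_ne_top_of_boundedSpace [BoundedSpace X] {s t : Set X}
    (hs : s.Nonempty) (ht : t.Nonempty) : hausdorffEDist s t ≠ ⊤ :=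
  hausdorffEDist_ne_top_of_nonempty_of_bounded hs ht (IsBounded.all s) (IsBounded.all t)

variable [BoundedSpace X]

theorem disjoint_of_tendsto_hausdorffDist (hA : ∀ i, (A i).Nonempty) [l.NeBot]
    (h : Tendsto (fun i => hausdorffDist (A i) K) l (𝓝 0)) {O : Set X} (hO : IsOpen O)
    (hOA : ∀ᶠ i in l, Disjoint O (A i)) : Disjoint O K := by
  refine disjoint_left.2 fun x hxO hxK => ?_
  obtain ⟨r, hr, hball⟩ := Metric.isOpen_iff.1 hO x hxO
  obtain ⟨i, hiO, hir⟩ := (hOA.and (h.eventually (gt_mem_nhds hr))).exists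
  obtain ⟨y, hyA, hxy⟩ := exists_dist_lt_of_hausdorffDist_lt' hxK hir
    (hausdorffEDist_ne_top_of_boundedSpace (hA i) ⟨x, hxK⟩)
  exact disjoint_left.1 hiO (hball (mem_ball.2 hxy)) hyA

theorem eventually_disjoint_of_tendsto_hausdorffDist (hK : IsCompact K) (hKne : K.Nonempty)
    (hA : ∀ i, (A i).Nonempty) (h : Tendsto (fun i => hausdorffDist (A i) K) l (𝓝 0))
    {C : Set X} (hC : IsCompact C) (hCK : Disjoint C K) : ∀ᶠ i in l, Disjoint C (A i) := by
  obtain ⟨δ, hδ, hKδ⟩ := hK.exists_thickening_subset_open hC.isClosed.isOpen_compl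
    (disjoint_left.1 hCK.symm)
  filter_upwards [h.eventually (gt_mem_nhds hδ)] with i hi
  refine disjoint_left.2 fun y hyC hyA => ?_
  obtain ⟨z, hzK, hyz⟩ := exists_dist_lt_of_hausdorffDist_lt hyA hi
    (hausdorffEDist_ne_top_of_boundedSpace (hA i) hKne)
  exact hKδ (mem_thickening_iff.2 ⟨z, hzK, hyz⟩) hyC

theorem mem_of_tendsto_hausdorffDist [l.NeBot] (hK : IsClosed K) (hKne : K.Nonempty)
    (h : Tendsto (fun i => hausdorffDist (A i) K) l (𝓝 0)) {x : X}
    (hx : ∀ᶠ i in l, x ∈ A i) : x ∈ K := by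
  refine (hK.mem_iff_infDist_zero hKne).2 (le_antisymm ?_ infDist_nonneg)
  refine ge_of_tendsto h (hx.mono fun i hxi => ?_)
  exact infDist_le_hausdorffDist_of_mem hxi
    (hausdorffEDist_ne_top_of_boundedSpace ⟨x, hxi⟩ hKne)

theorem compl_subset_range_of_tendsto_hausdorffDist {Y : Type*} {e : Y → X} {W : ι → Set Y}
    [l.NeBot] (hK : IsClosed K) (hKne : K.Nonempty)
    (h : Tendsto (fun i => hausdorffDist (e '' W i)ᶜ K) l (𝓝 0)) :
    Kᶜ ⊆ range e := fun x hxK => by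
  by_contra hx
  exact hxK (mem_of_tendsto_hausdorffDist hK hKne h
    (Eventually.of_forall fun i hxW => hx (image_subset_range e _ hxW)))

theorem image_subset_compl_of_tendsto_hausdorffDist {Y : Type*} [TopologicalSpace Y]
    [LocallyCompactSpace Y] {e : Y → X} {W : ι → Set Y} [l.NeBot] (he : IsOpenEmbedding e)
    (hW : ∀ i, (e '' W i)ᶜ.Nonempty)
    (h : Tendsto (fun i => hausdorffDist (e '' W i)ᶜ K) l (𝓝 0)) {V : Set Y} (hV : IsOpen V)
    (hVW : ∀ C ⊆ V, IsCompact C → ∀ᶠ i in l, C ⊆ W i) : e '' V ⊆ Kᶜ := by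
  rintro _ ⟨x, hx, rfl⟩ hxK
  obtain ⟨C, hC, hxC, hCV⟩ := exists_compact_subset hV hx
  have hCK : Disjoint (e '' interior C) K :=
    disjoint_of_tendsto_hausdorffDist hW h (he.isOpenMap _ isOpen_interior)
      ((hVW C hCV hC).mono fun i hi =>
        he.injective.disjoint_image_compl_image_iff.2 (interior_subset.trans hi))
  exact disjoint_left.1 hCK (mem_image_of_mem e hxC) hxK

end HausdorffLimit

theorem exists_subseq_tendsto_hausdorffDist {X : Type*} [MetricSpace X] [CompactSpace X]
    (A : ℕ → Set X) (hA : ∀ n, (A n).Nonempty) :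
    ∃ K : Set X, IsCompact K ∧ K.Nonempty ∧ ∃ t : ℕ → ℕ, StrictMono t ∧
      Tendsto (fun k => hausdorffDist (A (t k)) K) atTop (𝓝 0) := by
  let Ā : ℕ → TopologicalSpace.NonemptyCompacts X := fun n =>
    ⟨⟨closure (A n), isClosed_closure.isCompact⟩, (hA n).closure⟩
  obtain ⟨K, -, t, ht, hlim⟩ := isCompact_univ.tendsto_subseq (x := Ā) fun n => mem_univ _
  refine ⟨K, K.isCompact, K.nonempty, t, ht, ?_⟩
  simpa [Ā, Function.comp_def, NonemptyCompacts.dist_eq, hausdorffDist_closure₁] using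
    tendsto_iff_dist_tendsto_zero.1 hlim

section Caratheodory

variable {X : Type*} [MetricSpace X] {e : ℂ → X} {U : ℕ → Set ℂ} {u : ℕ → ℂ} {V : Set ℂ}
  {v : ℂ} {K : Set X}

theorem connectedComponentIn_subset_of_tendsto_hausdorffDist [BoundedSpace X] {ι : Type*}
    {l : Filter ι} {W : ι → Set ℂ} (he : IsOpenEmbedding e) (hK : IsCompact K)
    (hKne : K.Nonempty) (hW : ∀ i, (e '' W i)ᶜ.Nonempty)
    (h : Tendsto (fun i => hausdorffDist (e '' W i)ᶜ K) l (𝓝 0))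
    (hker : ∀ N, IsOpen N → IsConnected N → v ∈ N → (∀ᶠ i in l, N ⊆ W i) → N ⊆ V) :
    connectedComponentIn (e ⁻¹' Kᶜ) v ⊆ V := by
  intro x hx
  have hv : v ∈ e ⁻¹' Kᶜ := connectedComponentIn_nonempty_iff.1 ⟨x, hx⟩
  have hΩ : IsOpen (connectedComponentIn (e ⁻¹' Kᶜ) v) :=
    (hK.isClosed.isOpen_compl.preimage he.continuous).connectedComponentIn
  obtain ⟨N, hN, hNp, hvN, hxN, hNc, hNΩ⟩ := hΩ.exists_isPreconnected_mem_closure_subset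
    (isConnected_connectedComponentIn_iff.2 hv) (mem_connectedComponentIn hv) hx
  have hNK : Disjoint (e '' closure N) K := subset_compl_iff_disjoint_right.1
    (image_subset_iff.2 (hNΩ.trans (connectedComponentIn_subset _ _)))
  refine hker N hN ⟨⟨v, hvN⟩, hNp⟩ hvN ?_ hxN
  filter_upwards [eventually_disjoint_of_tendsto_hausdorffDist hK hKne hW h
    (hNc.image he.continuous) hNK] with i hi
  exact subset_closure.trans (he.injective.disjoint_image_compl_image_iff.1 hi)

theorem CaraConv.image_eq_connectedComponentIn [BoundedSpace X] (he : IsOpenEmbedding e)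
    (hW : ∀ n, (e '' U n)ᶜ.Nonempty) (hVopen : IsOpen V) (hVconn : IsConnected V) (hv : v ∈ V)
    (hcara : CaraConv U u V v) {s : ℕ → ℕ} (hs : StrictMono s) (hK : IsCompact K)
    (hKne : K.Nonempty) (h : Tendsto (fun k => hausdorffDist (e '' U (s k))ᶜ K) atTop (𝓝 0)) :
    e '' V = connectedComponentIn Kᶜ (e v) := by
  have hVK : e '' V ⊆ Kᶜ :=
    image_subset_compl_of_tendsto_hausdorffDist he (fun k => hW (s k)) h hVopen
      fun C hCV hC => hs.tendsto_atTop.eventually (hcara.2.1 C hCV hC)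
  rw [← he.image_connectedComponentIn (compl_subset_range_of_tendsto_hausdorffDist hK.isClosed
    hKne h) (hVK (mem_image_of_mem e hv))]
  congr 1
  refine subset_antisymm
    (hVconn.isPreconnected.subset_connectedComponentIn hv (image_subset_iff.1 hVK)) ?_
  exact connectedComponentIn_subset_of_tendsto_hausdorffDist he hK hKne (fun k => hW (s k)) h
    fun N hN hNconn hvN hev =>
      hcara.2.2 N hN hNconn hvN (hs.tendsto_atTop.frequently hev.frequently)

def IsComponentOfHausdorffLimits (e : ℂ → X) (U : ℕ → Set ℂ) (V : Set ℂ) (v : ℂ) : Prop :=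
  ∀ s : ℕ → ℕ, StrictMono s → ∀ K : Set X, IsCompact K → K.Nonempty →
    Tendsto (fun k => hausdorffDist (e '' U (s k))ᶜ K) atTop (𝓝 0) →
      e '' V = connectedComponentIn Kᶜ (e v)

namespace IsComponentOfHausdorffLimits

variable [CompactSpace X]

theorem eventually_subset (hlim : IsComponentOfHausdorffLimits e U V v)
    (he : IsOpenEmbedding e) (hW : ∀ n, (e '' U n)ᶜ.Nonempty) {C : Set ℂ} (hCV : C ⊆ V)
    (hC : IsCompact C) :
    ∀ᶠ n in atTop, C ⊆ U n := by
  by_contra hfreq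
  obtain ⟨s, hs, hsC⟩ := extraction_of_frequently_atTop (not_eventually.1 hfreq)
  obtain ⟨K, hK, hKne, t, ht, hst⟩ :=
    exists_subseq_tendsto_hausdorffDist (fun k => (e '' U (s k))ᶜ) fun k => hW (s k)
  have hCK : Disjoint (e '' C) K := subset_compl_iff_disjoint_right.1 <|
    (image_mono hCV).trans <| (hlim (s ∘ t) (hs.comp ht) K hK hKne hst).trans_subset
      (connectedComponentIn_subset _ _)
  obtain ⟨k, hk⟩ := (eventually_disjoint_of_tendsto_hausdorffDist hK hKne (fun k => hW _) hst
    (hC.image he.continuous) hCK).exists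
  exact hsC (t k) (he.injective.disjoint_image_compl_image_iff.1 hk)

theorem subset (hlim : IsComponentOfHausdorffLimits e U V v) (he : IsOpenEmbedding e)
    (hW : ∀ n, (e '' U n)ᶜ.Nonempty) {N : Set ℂ} (hN : IsOpen N) (hNp : IsPreconnected N)
    (hvN : v ∈ N) (hfreq : ∃ᶠ n in atTop, N ⊆ U n) : N ⊆ V := by
  obtain ⟨s, hs, hsN⟩ := extraction_of_frequently_atTop hfreq
  obtain ⟨K, hK, hKne, t, ht, hst⟩ :=
    exists_subseq_tendsto_hausdorffDist (fun k => (e '' U (s k))ᶜ) fun k => hW (s k)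
  have hNK : Disjoint (e '' N) K := disjoint_of_tendsto_hausdorffDist (fun k => hW _) hst
    (he.isOpenMap _ hN) (Eventually.of_forall fun k =>
      he.injective.disjoint_image_compl_image_iff.2 (hsN (t k)))
  rw [← image_subset_image_iff he.injective, hlim (s ∘ t) (hs.comp ht) K hK hKne hst]
  exact (hNp.image e he.continuous.continuousOn).subset_connectedComponentIn
    (mem_image_of_mem e hvN) (subset_compl_iff_disjoint_right.2 hNK)

end IsComponentOfHausdorffLimits

theorem caraConv_iff_isComponentOfHausdorffLimits [CompactSpace X] (he : IsOpenEmbedding e)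
    (hW : ∀ n, (e '' U n)ᶜ.Nonempty) (hVopen : IsOpen V) (hVconn : IsConnected V) (hv : v ∈ V) :
    CaraConv U u V v ↔ Tendsto u atTop (𝓝 v) ∧ IsComponentOfHausdorffLimits e U V v :=
  ⟨fun hcara => ⟨hcara.1, fun _ hs _ hK hKne h =>
      hcara.image_eq_connectedComponentIn he hW hVopen hVconn hv hs hK hKne h⟩,
    fun ⟨hu, hlim⟩ => ⟨hu, fun _ hCV hC => hlim.eventually_subset he hW hCV hC,
      fun _ hN hNconn hvN hfreq => hlim.subset he hW hN hNconn.isPreconnected hvN hfreq⟩⟩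

end Caratheodory

theorem caraConv_iff_hausdorff_general
    (X : Type*) [MetricSpace X] [CompactSpace X] (φ : OnePoint ℂ ≃ₜ X)
    (U : ℕ → Set ℂ) (u : ℕ → ℂ) (V : Set ℂ) (v : ℂ)
    (hVopen : IsOpen V) (hVconn : IsConnected V) (hv : v ∈ V) :
    CaraConv U u V v ↔
      (Tendsto u atTop (nhds v) ∧
        ∀ (s : ℕ → ℕ), StrictMono s → ∀ K : Set X, IsCompact K → K.Nonempty →
          Tendsto
            (fun k => hausdorffDist (φ '' (((fun z : ℂ => (z : OnePoint ℂ)) '' U (s k))ᶜ)) K)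
            atTop (nhds 0) →
          (fun z : ℂ => φ (z : OnePoint ℂ)) '' V = connectedComponentIn Kᶜ (φ (v : OnePoint ℂ))) := by
  have he : IsOpenEmbedding fun z : ℂ => φ z :=
    φ.isOpenEmbedding.comp OnePoint.isOpenEmbedding_coe
  have hcompl (S : Set ℂ) :
      φ '' (((↑) : ℂ → OnePoint ℂ) '' S)ᶜ = ((fun z : ℂ => φ z) '' S)ᶜ := by
    rw [φ.image_compl, image_image]
  have hW (S : Set ℂ) : ((fun z : ℂ => φ z) '' S)ᶜ.Nonempty :=
    ⟨φ OnePoint.infty, fun ⟨z, _, hz⟩ => OnePoint.coe_ne_infty z (φ.injective hz)⟩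
  simp only [hcompl]
  exact caraConv_iff_isComponentOfHausdorffLimits (u := u) he (fun n => hW (U n)) hVopen hVconn
    hv

/-- Carathéodory convergence is equivalent to the Hausdorff convergence of the complements
in the Riemann sphere (modelled as a compact metric space `X` homeomorphic to `OnePoint ℂ`):
for every subsequence whose complements converge in the Hausdorff metric to a compact set `K`,
the limit domain `V` is the connected component of the complement of `K` containing `v`. -/
theorem caraConv_iff_hausdorff
    (X : Type*) [MetricSpace X] [CompactSpace X] (φ : OnePoint ℂ ≃ₜ X)
    (U : ℕ → Set ℂ) (u : ℕ → ℂ) (V : Set ℂ) (v : ℂ)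
    (hUopen : ∀ n, IsOpen (U n)) (hUconn : ∀ n, IsConnected (U n)) (hun : ∀ n, u n ∈ U n)
    (hVopen : IsOpen V) (hVconn : IsConnected V) (hv : v ∈ V) :
    CaraConv U u V v ↔
      (Tendsto u atTop (nhds v) ∧
        ∀ (s : ℕ → ℕ), StrictMono s → ∀ K : Set X, IsCompact K → K.Nonempty →
          Tendsto
            (fun k => hausdorffDist (φ '' (((fun z : ℂ => (z : OnePoint ℂ)) '' U (s k))ᶜ)) K)
            atTop (nhds 0) →
          (fun z : ℂ => φ (z : OnePoint ℂ)) '' V = connectedComponentIn Kᶜ (φ (v : OnePoint ℂ))) :=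
  caraConv_iff_hausdorff_general X φ U u V v hVopen hVconn hv
end

section
/- A sequence of pointed domains (U_n, u_n) with u_n ∈ U_n ⊊ ℂ is precompact in the Carathéodory topology on proper pointed subdomains of ℂ if and only if the sequence (u_n) is bounded and there exists L ∈ (1, ∞) such that 1/L ≤ dist(u_n, ∂U_n) ≤ L for all n, where dist denotes Euclidean distance. -/
open Filter Metric Set

/-- Precompactness in the Carathéodory topology on pointed proper subdomains of ℂ:
every subsequence has a subsubsequence converging to a pointed proper subdomain. -/
def CaraPrecompact (U : ℕ → Set ℂ) (u : ℕ → ℂ) : Prop :=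
  ∀ s : ℕ → ℕ, StrictMono s → ∃ t : ℕ → ℕ, StrictMono t ∧
    ∃ (V : Set ℂ) (v : ℂ), IsOpen V ∧ IsConnected V ∧ V ≠ Set.univ ∧ v ∈ V ∧
      CaraConv (fun k => U (s (t k))) (fun k => u (s (t k))) V v

/-!
For `x ∈ U` open, `infDist x (frontier U)` is the largest `r` with `ball x r ⊆ U`. Along a
Carathéodory convergent sequence with limit `(V, v)`, a small ball around `v` eventually lies in
`U n`, while a ball reaching a point outside `V` frequently lying in `U n` would force that point
into `V`; so the markings, this radius and its inverse are eventually bounded. A quantity that is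
unbounded on the whole sequence has a subsequence without such a subsubsequence.

Conversely, pass to a subsequence along which the markings converge to `v` and the complements
`(U n)ᶜ` converge in the sense of Kuratowski to a closed set `K`: embed ℂ into the closed unit
disc, whose hyperspace of compact subsets is compact and second countable in the Vietoris
topology. The component of `v` in `Kᶜ` is a Carathéodory limit; the lower bound on the radius
keeps `v` outside `K` and the upper bound makes `K` nonempty, so this limit is proper.
-/

open Topology TopologicalSpace

section Kuratowski

variable {X : Type*} [TopologicalSpace X] {ι : Type*} {l : Filter ι}

/-- Kuratowski convergence: `lim sup F ⊆ A ⊆ lim inf F`. -/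
def IsKuratowskiLimit (l : Filter ι) (F : ι → Set X) (A : Set X) : Prop :=
  (∀ x, (∀ W ∈ 𝓝 x, ∃ᶠ i in l, (F i ∩ W).Nonempty) → x ∈ A) ∧
    ∀ x ∈ A, ∀ W ∈ 𝓝 x, ∀ᶠ i in l, (F i ∩ W).Nonempty

namespace IsKuratowskiLimit

variable {F : ι → Set X} {A : Set X}

theorem isClosed [l.NeBot] (h : IsKuratowskiLimit l F A) : IsClosed A := by
  refine isClosed_of_closure_subset fun x hx => h.1 x fun W hW => ?_
  obtain ⟨a, haW, haA⟩ := mem_closure_iff_nhds.1 hx (interior W) (interior_mem_nhds.2 hW)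
  exact (h.2 a haA _ (isOpen_interior.mem_nhds haW)).frequently.mono
    fun i => Nonempty.mono (inter_subset_inter_right _ interior_subset)

theorem eventually_disjoint_of_isCompact (h : IsKuratowskiLimit l F A) {C : Set X}
    (hC : IsCompact C) (hCA : Disjoint C A) : ∀ᶠ i in l, Disjoint (F i) C := by
  refine hC.induction_on (by simp) (fun s t hst ht => ht.mono fun i => Disjoint.mono_right hst)
    (fun s t hs ht => (hs.and ht).mono fun i hi => disjoint_union_right.2 hi) fun x hx => ?_
  obtain ⟨W, hW, hFW⟩ : ∃ W ∈ 𝓝 x, ∀ᶠ i in l, ¬(F i ∩ W).Nonempty := by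
    by_contra! hW
    exact hCA.notMem_of_mem_left hx (h.1 x hW)
  exact ⟨W, mem_nhdsWithin_of_mem_nhds hW,
    hFW.mono fun i hi => disjoint_iff_inter_eq_empty.2 (not_nonempty_iff_eq_empty.1 hi)⟩

end IsKuratowskiLimit

theorem IsKuratowskiLimit.preimage_of_closure_image {Y : Type*} [TopologicalSpace Y] {e : X → Y}
    (he : IsInducing e) {F : ι → Set X} {B : Set Y}
    (h : IsKuratowskiLimit l (fun i => closure (e '' F i)) B) :
    IsKuratowskiLimit l F (e ⁻¹' B) := by
  refine ⟨fun x hx => h.1 (e x) fun W hW => ?_, fun x hx W hW => ?_⟩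
  · exact (hx _ (he.continuous.continuousAt hW)).mono fun i ⟨y, hyF, hyW⟩ =>
      ⟨e y, subset_closure (mem_image_of_mem e hyF), hyW⟩
  · obtain ⟨T, hT, hTW⟩ := (he.nhds_eq_comap x ▸ hW : W ∈ comap e (𝓝 (e x)))
    filter_upwards [h.2 (e x) hx (interior T) (interior_mem_nhds.2 hT)] with i ⟨z, hzF, hzT⟩
    obtain ⟨_, hyT, y, hyF, rfl⟩ := mem_closure_iff.1 hzF _ isOpen_interior hzT
    exact ⟨y, hyF, hTW (interior_subset (s := T) hyT)⟩

theorem isKuratowskiLimit_of_tendsto_compacts [T2Space X] {G : ι → Compacts X} {A : Compacts X}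
    (h : Tendsto G l (𝓝 A)) : IsKuratowskiLimit l (fun i => (G i : Set X)) A := by
  refine ⟨fun x hx => by_contra fun hxA => ?_, fun x hx W hW => ?_⟩
  · obtain ⟨W, O, hW, hO, hxW, hAO, hWO⟩ := SeparatedNhds.of_isCompact_isCompact
      isCompact_singleton A.isCompact (disjoint_singleton_left.2 hxA)
    have hGO : ∀ᶠ i in l, (G i : Set X) ⊆ O :=
      h.eventually ((Compacts.isOpen_subsets_of_isOpen hO).mem_nhds hAO)
    obtain ⟨i, ⟨y, hyG, hyW⟩, hi⟩ :=
      ((hx W (hW.mem_nhds (hxW rfl))).and_eventually hGO).exists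
    exact hWO.notMem_of_mem_left hyW (hi hyG)
  · obtain ⟨W', hW'W, hW', hxW'⟩ := mem_nhds_iff.1 hW
    have hAW' := (Compacts.isOpen_inter_nonempty_of_isOpen hW').mem_nhds ⟨x, hx, hxW'⟩
    exact (h.eventually hAW').mono fun i hi => hi.mono (inter_subset_inter_right _ hW'W)

theorem exists_strictMono_isKuratowskiLimit_of_isInducing {Y : Type*} [TopologicalSpace Y]
    [CompactSpace Y] [T2Space Y] [SecondCountableTopology Y] {e : X → Y} (he : IsInducing e)
    (F : ℕ → Set X) :
    ∃ φ : ℕ → ℕ, StrictMono φ ∧ ∃ A, IsKuratowskiLimit atTop (F ∘ φ) A := by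
  let G : ℕ → Compacts Y := fun n => ⟨closure (e '' F n), isClosed_closure.isCompact⟩
  obtain ⟨B, φ, hφ, hB⟩ := CompactSpace.tendsto_subseq G
  exact ⟨φ, hφ, _, (isKuratowskiLimit_of_tendsto_compacts hB).preimage_of_closure_image he⟩

end Kuratowski

theorem exists_strictMono_isKuratowskiLimit {E : Type*} [NormedAddCommGroup E] [NormedSpace ℝ E]
    [ProperSpace E] (F : ℕ → Set E) :
    ∃ φ : ℕ → ℕ, StrictMono φ ∧ ∃ A, IsKuratowskiLimit atTop (F ∘ φ) A :=
  have : CompactSpace (closedBall (0 : E) 1) :=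
    isCompact_iff_compactSpace.mp (isCompact_closedBall 0 1)
  exists_strictMono_isKuratowskiLimit_of_isInducing
    ((IsEmbedding.inclusion ball_subset_closedBall).comp
      Homeomorph.unitBall.isEmbedding).isInducing F

section Metric

variable {X : Type*} [PseudoMetricSpace X] {ι : Type*} {l : Filter ι}
  {U : ι → Set X} {K : Set X} {u : ι → X} {v : X}

theorem IsKuratowskiLimit.notMem_of_eventually_ball_subset [l.NeBot]
    (hK : IsKuratowskiLimit l (fun i => (U i)ᶜ) K) (hu : Tendsto u l (𝓝 v)) {r : ℝ}
    (hr : 0 < r) (hball : ∀ᶠ i in l, ball (u i) r ⊆ U i) : v ∉ K := by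
  intro hvK
  have hr2 := ball_mem_nhds v (half_pos hr)
  obtain ⟨i, ⟨y, hyU, hyv⟩, hsub, hui⟩ :=
    ((hK.2 v hvK _ hr2).and (hball.and (hu hr2))).exists
  refine hyU (hsub (ball_subset_ball' ?_ hyv))
  linarith [mem_ball'.1 hui]

theorem IsKuratowskiLimit.nonempty_of_frequently_not_ball_subset [ProperSpace X]
    (hK : IsKuratowskiLimit l (fun i => (U i)ᶜ) K) (hu : Tendsto u l (𝓝 v)) {R : ℝ}
    (hR : ∃ᶠ i in l, ¬ball (u i) R ⊆ U i) : K.Nonempty := by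
  by_contra hKe
  have hC := hK.eventually_disjoint_of_isCompact (isCompact_closedBall v (R + 1))
    (by simp [not_nonempty_iff_eq_empty.1 hKe])
  obtain ⟨i, hi, hCU, hui⟩ := (hR.and_eventually (hC.and (hu (ball_mem_nhds v one_pos)))).exists
  refine hi (((ball_subset_ball' ?_).trans ball_subset_closedBall).trans
    (disjoint_compl_left_iff_subset.1 hCU))
  linarith [mem_ball.1 hui]

end Metric

theorem ball_subset_of_le_infDist_frontier {E : Type*} [NormedAddCommGroup E] [NormedSpace ℝ E]
    {U : Set E} {x : E} {r : ℝ} (hU : IsOpen U) (hx : x ∈ U)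
    (hr : r ≤ infDist x (frontier U)) : ball x r ⊆ U := by
  rcases le_or_gt r 0 with hr0 | hr0
  · simp [ball_eq_empty.2 hr0]
  have hfr : ball x r ⊆ (frontier U)ᶜ := (ball_subset_ball hr).trans ball_infDist_subset_compl
  exact (convex_ball x r).isPreconnected.subset_of_closure_inter_subset hU
    ⟨x, mem_ball_self hr0, hx⟩ fun y ⟨hyc, hyb⟩ => by_contra fun hyU =>
      hfr hyb (hU.frontier_eq ▸ ⟨hyc, hyU⟩)

theorem le_infDist_frontier_of_ball_subset {X : Type*} [PseudoMetricSpace X] {U : Set X} {x : X}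
    {r : ℝ} (hU : IsOpen U) (hfr : (frontier U).Nonempty) (h : ball x r ⊆ U) :
    r ≤ infDist x (frontier U) := by
  by_contra! hr
  obtain ⟨y, hy, hxy⟩ := (infDist_lt_iff hfr).1 hr
  exact (hU.frontier_eq ▸ hy).2 (h (mem_ball'.2 hxy))

theorem bddAbove_range_of_forall_subseq {f : ℕ → ℝ}
    (h : ∀ s : ℕ → ℕ, StrictMono s → ∃ t : ℕ → ℕ, StrictMono t ∧
      IsBoundedUnder (· ≤ ·) atTop (f ∘ s ∘ t)) : BddAbove (range f) := by
  by_contra hf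
  have hfreq (m : ℕ) : ∃ᶠ n in atTop, (m : ℝ) < f n := fun hm =>
    hf (isBoundedUnder_of_eventually_le (hm.mono fun _ => not_lt.1)).bddAbove_range
  obtain ⟨s, hs, hsf⟩ := extraction_forall_of_frequently hfreq
  obtain ⟨t, ht, hbdd⟩ := h s hs
  exact not_isBoundedUnder_of_tendsto_atTop (tendsto_atTop_mono (fun k => (hsf (t k)).le)
    (tendsto_natCast_atTop_atTop.comp ht.tendsto_atTop)) hbdd

theorem exists_one_lt_forall_one_div_le_and_le {ι : Type*} {d : ι → ℝ} (hd : ∀ i, 0 < d i)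
    (hle : BddAbove (range d)) (hinv : BddAbove (range fun i => (d i)⁻¹)) :
    ∃ L : ℝ, 1 < L ∧ ∀ i, 1 / L ≤ d i ∧ d i ≤ L := by
  obtain ⟨A, hA⟩ := hle
  obtain ⟨B, hB⟩ := hinv
  refine ⟨max (max A B) 2, by simp, fun i => ⟨?_, ?_⟩⟩
  · rw [one_div_le (by positivity) (hd i), one_div]
    exact (hB (mem_range_self i)).trans ((le_max_right A B).trans (le_max_left _ _))
  · exact (hA (mem_range_self i)).trans ((le_max_left A B).trans (le_max_left _ _))

section Caratheodory

variable {U : ℕ → Set ℂ} {u : ℕ → ℂ} {V : Set ℂ} {v : ℂ}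

theorem CaraConv.eventually_ball_subset (h : CaraConv U u V v) (hV : IsOpen V) (hv : v ∈ V) :
    ∃ r > 0, ∀ᶠ n in atTop, ball (u n) r ⊆ U n := by
  obtain ⟨ε, hε, hεV⟩ := nhds_basis_closedBall.mem_iff.1 (hV.mem_nhds hv)
  refine ⟨ε / 2, half_pos hε, ?_⟩
  filter_upwards [h.2.1 _ hεV (isCompact_closedBall v ε), h.1 (ball_mem_nhds v (half_pos hε))]
    with n hn hun
  refine ((ball_subset_ball' ?_).trans ball_subset_closedBall).trans hn
  linarith [mem_ball.1 hun]

theorem CaraConv.eventually_not_ball_subset (h : CaraConv U u V v) (hV : V ≠ univ) :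
    ∃ R, ∀ᶠ n in atTop, ¬ball (u n) R ⊆ U n := by
  obtain ⟨w, hw⟩ := (ne_univ_iff_exists_notMem V).1 hV
  refine ⟨dist w v + 2, not_frequently.1 fun hfreq => hw ?_⟩
  have hR : 0 < dist w v + 1 := by positivity
  refine h.2.2 _ isOpen_ball (isConnected_ball hR) (mem_ball_self hR)
    ((hfreq.and_eventually (h.1 (ball_mem_nhds v one_pos))).mono fun n ⟨hsub, hun⟩ =>
      (ball_subset_ball' ?_).trans hsub) (mem_ball.2 (lt_add_one _))
  linarith [mem_ball'.1 hun]

theorem caraConv_connectedComponentIn {K : Set ℂ}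
    (hK : IsKuratowskiLimit atTop (fun n => (U n)ᶜ) K) (hu : Tendsto u atTop (𝓝 v)) :
    CaraConv U u (connectedComponentIn Kᶜ v) v := by
  refine ⟨hu, fun C hCV hC => ?_, fun N hNo hNc hvN hN => ?_⟩
  · have hCK : Disjoint C K :=
      subset_compl_iff_disjoint_right.1 (hCV.trans (connectedComponentIn_subset _ _))
    exact (hK.eventually_disjoint_of_isCompact hC hCK).mono fun n =>
      disjoint_compl_left_iff_subset.1
  · refine hNc.isPreconnected.subset_connectedComponentIn hvN fun x hxN hxK => ?_
    obtain ⟨n, hNU, y, hyU, hyN⟩ :=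
      (hN.and_eventually (hK.2 x hxK N (hNo.mem_nhds hxN))).exists
    exact hyU (hNU hyN)

theorem exists_caraConv_of_isKuratowskiLimit {K : Set ℂ}
    (hK : IsKuratowskiLimit atTop (fun n => (U n)ᶜ) K) (hu : Tendsto u atTop (𝓝 v)) {r R : ℝ}
    (hr : 0 < r) (hball : ∀ᶠ n in atTop, ball (u n) r ⊆ U n)
    (hnot : ∃ᶠ n in atTop, ¬ball (u n) R ⊆ U n) :
    ∃ V, IsOpen V ∧ IsConnected V ∧ V ≠ univ ∧ v ∈ V ∧ CaraConv U u V v := by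
  have hvK : v ∉ K := hK.notMem_of_eventually_ball_subset hu hr hball
  obtain ⟨w, hwK⟩ := hK.nonempty_of_frequently_not_ball_subset hu hnot
  refine ⟨connectedComponentIn Kᶜ v, hK.isClosed.isOpen_compl.connectedComponentIn,
    isConnected_connectedComponentIn_iff.2 hvK, fun hV => ?_, mem_connectedComponentIn hvK,
    caraConv_connectedComponentIn hK hu⟩
  exact connectedComponentIn_subset _ _ (hV ▸ mem_univ w : w ∈ connectedComponentIn Kᶜ v) hwK

namespace CaraPrecompact

theorem bddAbove_range_norm (h : CaraPrecompact U u) : BddAbove (range fun n => ‖u n‖) :=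
  bddAbove_range_of_forall_subseq fun s hs => by
    obtain ⟨t, ht, V, v, -, -, -, -, hconv⟩ := h s hs
    exact ⟨t, ht, ((continuous_norm.tendsto v).comp hconv.1).isBoundedUnder_le⟩

theorem bddAbove_range_infDist_frontier (h : CaraPrecompact U u) (hU : ∀ n, IsOpen (U n))
    (hu : ∀ n, u n ∈ U n) : BddAbove (range fun n => infDist (u n) (frontier (U n))) :=
  bddAbove_range_of_forall_subseq fun s hs => by
    obtain ⟨t, ht, V, v, -, -, hV, -, hconv⟩ := h s hs
    obtain ⟨R, hR⟩ := hconv.eventually_not_ball_subset hV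
    exact ⟨t, ht, isBoundedUnder_of_eventually_le (hR.mono fun k hk =>
      (not_le.1 (mt (ball_subset_of_le_infDist_frontier (hU _) (hu _)) hk)).le)⟩

theorem bddAbove_range_inv_infDist_frontier (h : CaraPrecompact U u) (hU : ∀ n, IsOpen (U n))
    (hfr : ∀ n, (frontier (U n)).Nonempty) :
    BddAbove (range fun n => (infDist (u n) (frontier (U n)))⁻¹) :=
  bddAbove_range_of_forall_subseq fun s hs => by
    obtain ⟨t, ht, V, v, hVo, -, -, hv, hconv⟩ := h s hs
    obtain ⟨r, hr, hev⟩ := hconv.eventually_ball_subset hVo hv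
    exact ⟨t, ht, isBoundedUnder_of_eventually_le (hev.mono fun k hk =>
      inv_anti₀ hr (le_infDist_frontier_of_ball_subset (hU _) (hfr _) hk))⟩

end CaraPrecompact

theorem caraPrecompact_of_norm_le_of_ball_subset {M r R : ℝ} (hM : ∀ n, ‖u n‖ ≤ M)
    (hr : 0 < r) (hball : ∀ n, ball (u n) r ⊆ U n) (hnot : ∀ n, ¬ball (u n) R ⊆ U n) :
    CaraPrecompact U u := by
  intro s hs
  obtain ⟨v, -, t₁, ht₁, hv⟩ :=
    (isCompact_closedBall (0 : ℂ) M).tendsto_subseq (x := u ∘ s)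
      fun k => mem_closedBall_zero_iff.2 (hM (s k))
  obtain ⟨t₂, ht₂, K, hK⟩ :=
    exists_strictMono_isKuratowskiLimit fun k => (U (s (t₁ k)))ᶜ
  obtain ⟨V, hV⟩ := exists_caraConv_of_isKuratowskiLimit hK (hv.comp ht₂.tendsto_atTop) hr
    (.of_forall fun _ => hball _) (.of_forall fun _ => hnot _)
  exact ⟨t₁ ∘ t₂, ht₁.comp ht₂, V, v, hV⟩

end Caratheodory

theorem caraPrecompact_iff_general (U : ℕ → Set ℂ) (u : ℕ → ℂ)
    (hUopen : ∀ n, IsOpen (U n))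
    (hUproper : ∀ n, U n ≠ Set.univ) (hun : ∀ n, u n ∈ U n) :
    CaraPrecompact U u ↔
      ((∃ M : ℝ, ∀ n, ‖u n‖ ≤ M) ∧
        ∃ L : ℝ, 1 < L ∧ ∀ n,
          1 / L ≤ infDist (u n) (frontier (U n)) ∧ infDist (u n) (frontier (U n)) ≤ L) := by
  have hfr (n : ℕ) : (frontier (U n)).Nonempty :=
    nonempty_frontier_iff.2 ⟨⟨u n, hun n⟩, hUproper n⟩
  constructor
  · intro h
    have hpos (n : ℕ) : 0 < infDist (u n) (frontier (U n)) := by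
      obtain ⟨r, hr, hsub⟩ := isOpen_iff.1 (hUopen n) (u n) (hun n)
      exact hr.trans_le (le_infDist_frontier_of_ball_subset (hUopen n) (hfr n) hsub)
    obtain ⟨M, hM⟩ := h.bddAbove_range_norm
    exact ⟨⟨M, forall_mem_range.1 hM⟩, exists_one_lt_forall_one_div_le_and_le hpos
      (h.bddAbove_range_infDist_frontier hUopen hun)
      (h.bddAbove_range_inv_infDist_frontier hUopen hfr)⟩
  · rintro ⟨⟨M, hM⟩, L, hL, hd⟩
    refine caraPrecompact_of_norm_le_of_ball_subset hM (one_div_pos.2 (by linarith))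
      (fun n => ball_subset_of_le_infDist_frontier (hUopen n) (hun n) (hd n).1)
      (R := L + 1) fun n hn => ?_
    linarith [le_infDist_frontier_of_ball_subset (hUopen n) (hfr n) hn, (hd n).2]

theorem caraPrecompact_iff (U : ℕ → Set ℂ) (u : ℕ → ℂ)
    (hUopen : ∀ n, IsOpen (U n)) (hUconn : ∀ n, IsConnected (U n))
    (hUproper : ∀ n, U n ≠ Set.univ) (hun : ∀ n, u n ∈ U n) :
    CaraPrecompact U u ↔
      ((∃ M : ℝ, ∀ n, ‖u n‖ ≤ M) ∧
        ∃ L : ℝ, 1 < L ∧ ∀ n,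
          1 / L ≤ infDist (u n) (frontier (U n)) ∧ infDist (u n) (frontier (U n)) ≤ L) :=
  caraPrecompact_iff_general U u hUopen hUproper hun
end
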